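/- arXiv:1604.08717 — 2 statements merged into one kernel-verified Lean document; each statement's English description precedes it below -/
import Mathlib

section
/- Let 1 < c < 3 with c ≠ 2, let N be sufficiently large, and set X = (N/5)^{1/c}. Then ∫_{−∞}^{+∞} I(x)⁶ e(−xN) Φ(x) dx ≫ ε·X^{6−c}, where the implied constant depends only on c. -/
open MeasureTheory

noncomputable def e (t : ℝ) : ℂ := Complex.exp (2 * Real.pi * Complex.I * t)

/-- The integral `I(x) = ∫_{X/2}^X e(t^c x) dt`. -/
noncomputable def I (X c : ℝ) (x : ℝ) : ℂ := ∫ t in (X / 2)..X, e (t ^ c * x)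

section Aux

open Real intervalIntegral

lemma e_continuous : Continuous e :=
  Complex.continuous_exp.comp (by continuity)

lemma e_norm (t : ℝ) : ‖e t‖ = 1 := by
  unfold e
  rw [Complex.norm_exp]
  have : (2 * (Real.pi:ℂ) * Complex.I * (t:ℂ)).re = 0 := by
    simp [Complex.mul_re, Complex.mul_im]
  rw [this, Real.exp_zero]

lemma e_add (u v : ℝ) : e (u + v) = e u * e v := by
  unfold e
  rw [← Complex.exp_add]
  push_cast
  ring_nf

lemma I_cont (c : ℝ) (hc : 0 < c) (X : ℝ) : Continuous (I X c) := by
  have h : Continuous (Function.uncurry fun (x t : ℝ) => e (t ^ c * x)) :=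
    e_continuous.comp (((Real.continuous_rpow_const hc.le).comp continuous_snd).mul continuous_fst)
  exact intervalIntegral.continuous_parametric_intervalIntegral_of_continuous h continuous_const

lemma I_norm (c X : ℝ) (hX : 0 ≤ X) (x : ℝ) : ‖I X c x‖ ≤ X / 2 := by
  have := intervalIntegral.norm_integral_le_of_norm_le_const (a := X/2) (b := X) (C := 1)
    (f := fun t => e (t ^ c * x)) (fun t _ => le_of_eq (e_norm _))
  calc ‖I X c x‖ ≤ 1 * |X - X/2| := this
  _ = X / 2 := by rw [one_mul, abs_of_nonneg (by linarith)]; ring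

lemma step (c : ℝ) (hc : 0 < c) (X : ℝ) (hX : 0 ≤ X) (m : ℕ) (G : ℝ → ℂ)
    (hG : Integrable G) :
    ∫ x : ℝ, (I X c x) ^ (m + 1) * G x
      = ∫ t in (X/2)..X, ∫ x : ℝ, (I X c x) ^ m * (e (t ^ c * x) * G x) := by
  have hle : X / 2 ≤ X := by linarith
  set ν : Measure ℝ := volume.restrict (Set.Ioc (X/2) X) with hν
  have hswap : ∫ x : ℝ, ∫ t, (I X c x) ^ m * (e (t ^ c * x) * G x) ∂ν
      = ∫ t, ∫ x : ℝ, (I X c x) ^ m * (e (t ^ c * x) * G x) ∂volume ∂ν := by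
    apply MeasureTheory.integral_integral_swap
    have hcont : Continuous (fun p : ℝ × ℝ => (I X c p.1) ^ m * e (p.2 ^ c * p.1)) :=
      ((I_cont c hc X).comp continuous_fst).pow m |>.mul
        (e_continuous.comp (((Real.continuous_rpow_const hc.le).comp continuous_snd).mul
          continuous_fst))
    have hasm : AEStronglyMeasurable
        (Function.uncurry fun x t => (I X c x) ^ m * (e (t ^ c * x) * G x))
        (volume.prod ν) := by
      have : (Function.uncurry fun x t => (I X c x) ^ m * (e (t ^ c * x) * G x))
          = fun p : ℝ × ℝ => ((I X c p.1) ^ m * e (p.2 ^ c * p.1)) * G p.1 := by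
        ext p; simp [Function.uncurry]; ring
      rw [this]
      exact hcont.aestronglyMeasurable.mul hG.1.comp_fst
    apply MeasureTheory.Integrable.mono' (g := fun p : ℝ × ℝ => (X/2) ^ m * ‖G p.1‖) _ hasm
    · filter_upwards with p
      simp only [Function.uncurry, norm_mul, norm_pow, e_norm]
      have h1 : ‖I X c p.1‖ ^ m ≤ (X/2) ^ m :=
        pow_le_pow_left₀ (norm_nonneg _) (I_norm c X hX p.1) m
      have h2 : ‖G p.1‖ ≥ 0 := norm_nonneg _
      nlinarith [pow_nonneg (norm_nonneg (I X c p.1)) m]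
    · have h1 : Integrable (fun x : ℝ => (X/2) ^ m * ‖G x‖) volume := (hG.norm.const_mul _)
      have h2 : Integrable (fun _ : ℝ => (1:ℝ)) ν := by
        rw [hν]
        refine (integrable_const_iff).2 (Or.inr ?_)
        infer_instance
      have := h1.mul_prod h2
      simpa using this
  calc ∫ x : ℝ, (I X c x) ^ (m + 1) * G x
      = ∫ x : ℝ, ∫ t, (I X c x) ^ m * (e (t ^ c * x) * G x) ∂ν := by
        congr 1; ext x
        rw [hν, ← intervalIntegral.integral_of_le hle,
          intervalIntegral.integral_const_mul]
        rw [show (fun t => e (t ^ c * x) * G x) = fun t => (e (t ^ c * x) * G x) from rfl]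
        rw [intervalIntegral.integral_mul_const]
        show (I X c x) ^ (m+1) * G x = (I X c x) ^ m * (I X c x * G x)
        ring
  _ = ∫ t, ∫ x : ℝ, (I X c x) ^ m * (e (t ^ c * x) * G x) ∂volume ∂ν := hswap
  _ = ∫ t in (X/2)..X, ∫ x : ℝ, (I X c x) ^ m * (e (t ^ c * x) * G x) := by
        rw [hν, intervalIntegral.integral_of_le hle]

lemma fourier_eq (φ : ℝ → ℝ) (x : ℝ) :
    FourierTransform.fourier (fun y => (φ y : ℂ)) x = ∫ y : ℝ, e (-(x * y)) * (φ y : ℂ) := by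
  rw [Real.fourier_eq]
  congr 1; ext y
  rw [RCLike.inner_apply, conj_trivial, Circle.smul_def, Real.fourierChar_apply, smul_eq_mul]
  unfold e; push_cast; ring_nf

lemma fourierInv_eq (Φ : ℝ → ℂ) (v : ℝ) :
    FourierTransformInv.fourierInv Φ v = ∫ x : ℝ, e (v * x) * Φ x := by
  rw [Real.fourierInv_eq]
  congr 1; ext x
  rw [RCLike.inner_apply, conj_trivial, Circle.smul_def, Real.fourierChar_apply, smul_eq_mul]
  unfold e; push_cast; ring_nf

lemma phi_int (a b : ℝ) (φ : ℝ → ℝ) (hab2 : 0 < a + b) (hφc : Continuous φ)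
    (h4 : ∀ y, a + b ≤ |y| → φ y = 0) : Integrable (fun y => (φ y : ℂ)) := by
  apply Continuous.integrable_of_hasCompactSupport
    (Complex.continuous_ofReal.comp hφc)
  apply HasCompactSupport.intro (isCompact_Icc (a := -(a+b)) (b := a+b))
  intro y hy
  have : a + b ≤ |y| := by
    simp only [Set.mem_Icc, not_and_or, not_le] at hy
    rcases hy with h | h
    · rw [abs_of_neg (by linarith)]; linarith
    · rw [abs_of_pos (by linarith)]; linarith
  simp [h4 y this]

lemma Phi_eq (φ : ℝ → ℝ) (Φ : ℝ → ℂ)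
    (hΦ : ∀ x, Φ x = ∫ y : ℝ, e (-(x * y)) * (φ y : ℂ)) :
    Φ = FourierTransform.fourier (fun y => (φ y : ℂ)) := by
  funext x; rw [hΦ x, fourier_eq]

lemma Phi_cont (a b : ℝ) (φ : ℝ → ℝ) (Φ : ℝ → ℂ) (hab2 : 0 < a + b)
    (hφc : Continuous φ) (h4 : ∀ y, a + b ≤ |y| → φ y = 0)
    (hΦ : ∀ x, Φ x = ∫ y : ℝ, e (-(x * y)) * (φ y : ℂ)) : Continuous Φ := by
  rw [Phi_eq φ Φ hΦ]
  exact VectorFourier.fourierIntegral_continuous Real.continuous_fourierChar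
    (by exact continuous_inner) (phi_int a b φ hab2 hφc h4)

lemma inversion (a b : ℝ) (φ : ℝ → ℝ) (Φ : ℝ → ℂ) (hab2 : 0 < a + b)
    (hφc : Continuous φ) (h4 : ∀ y, a + b ≤ |y| → φ y = 0)
    (hΦ : ∀ x, Φ x = ∫ y : ℝ, e (-(x * y)) * (φ y : ℂ))
    (hΦi : Integrable Φ) (v : ℝ) :
    ∫ x : ℝ, e (v * x) * Φ x = (φ v : ℂ) := by
  rw [← fourierInv_eq]
  have h1 : Integrable (fun y => (φ y : ℂ)) := phi_int a b φ hab2 hφc h4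
  have h2 : Integrable (FourierTransform.fourier fun y => (φ y : ℂ)) := by
    rw [← Phi_eq φ Φ hΦ]; exact hΦi
  have := h1.fourierInv_fourier_eq h2
    (v := v) ((Complex.continuous_ofReal.comp hφc).continuousAt)
  rw [Phi_eq φ Φ hΦ]
  exact this

lemma Phi_integrable (Φ : ℝ → ℂ) (hΦc : Continuous Φ) (k : ℕ) (hk : 1 ≤ k) (a b : ℝ)
    (ha : 0 ≤ a) (hb : 0 < b)
    (hB1 : ∀ x, ‖Φ x‖ ≤ 2 * a)
    (hB2 : ∀ x : ℝ, x ≠ 0 → ‖Φ x‖ ≤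
      min (1 / (Real.pi * |x|)) (1 / (Real.pi * |x|) * ((k : ℝ) / (2 * Real.pi * |x| * b)) ^ k)) :
    Integrable Φ := by
  set M : ℝ := (1 / Real.pi) * ((k : ℝ) / (2 * Real.pi * b)) ^ k with hM
  have hπ := Real.pi_pos
  have hM0 : 0 ≤ M := by positivity
  set K : ℝ := max (4 * a) (2 * M) with hK
  have hK1 : 4 * a ≤ K := le_max_left _ _
  have hK2 : 2 * M ≤ K := le_max_right _ _
  apply MeasureTheory.Integrable.mono' ((integrable_inv_one_add_sq).const_mul K)
    hΦc.aestronglyMeasurable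
  filter_upwards with x
  rcases le_or_gt |x| 1 with hx | hx
  · have hx2 : x ^ 2 ≤ 1 := by nlinarith [sq_abs x, abs_nonneg x]
    have h1 : (2:ℝ)⁻¹ ≤ (1 + x ^ 2)⁻¹ := by
      apply inv_anti₀ (by positivity) (by nlinarith)
    calc ‖Φ x‖ ≤ 2 * a := hB1 x
    _ ≤ K * 2⁻¹ := by rw [hK]; rcases le_max_left (4*a) (2*M) with h; nlinarith [le_max_left (4*a) (2*M)]
    _ ≤ K * (1 + x ^ 2)⁻¹ := by
        apply mul_le_mul_of_nonneg_left h1 (le_trans (by positivity) hK1)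
  · have hx0 : x ≠ 0 := by
      intro h; rw [h, abs_zero] at hx; norm_num at hx
    have hxpos : (0:ℝ) < |x| := by positivity
    have hB := (hB2 x hx0).trans (min_le_right _ _)
    have hsplit : (k : ℝ) / (2 * Real.pi * |x| * b) = ((k : ℝ) / (2 * Real.pi * b)) * |x|⁻¹ := by
      rw [show 2 * Real.pi * |x| * b = (2*Real.pi*b) * |x| by ring, div_mul_eq_div_div]
      rw [div_eq_mul_inv]
    have h1 : 1 / (Real.pi * |x|) * ((k : ℝ) / (2 * Real.pi * |x| * b)) ^ k
        = M * (|x|⁻¹ * (|x|⁻¹) ^ k) := by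
      rw [hsplit, mul_pow, hM]; field_simp
    have h2 : |x|⁻¹ * (|x|⁻¹) ^ k ≤ (x ^ 2)⁻¹ := by
      have hh : |x| ^ 2 ≤ |x| ^ (k + 1) := pow_le_pow_right₀ hx.le (by omega)
      have hpos : (0:ℝ) < |x| ^ 2 := by positivity
      calc |x|⁻¹ * (|x|⁻¹) ^ k = (|x| ^ (k+1))⁻¹ := by rw [← pow_succ', inv_pow]
      _ ≤ (|x| ^ 2)⁻¹ := inv_anti₀ hpos hh
      _ = (x ^ 2)⁻¹ := by rw [sq_abs]
    have h3 : ‖Φ x‖ ≤ M * (x ^ 2)⁻¹ := by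
      calc ‖Φ x‖ ≤ M * (|x|⁻¹ * (|x|⁻¹) ^ k) := by rw [← h1]; exact hB
      _ ≤ M * (x ^ 2)⁻¹ := mul_le_mul_of_nonneg_left h2 hM0
    have hx2 : (1:ℝ) ≤ x ^ 2 := by nlinarith [sq_abs x]
    have e1 : (2 * x ^ 2)⁻¹ ≤ (1 + x ^ 2)⁻¹ := inv_anti₀ (by positivity) (by nlinarith)
    calc ‖Φ x‖ ≤ M * (x ^ 2)⁻¹ := h3
    _ = 2 * M * (2 * x ^ 2)⁻¹ := by rw [mul_inv]; ring
    _ ≤ K * (1 + x ^ 2)⁻¹ :=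
        mul_le_mul hK2 e1 (by positivity) (le_trans (by positivity) hK2)

lemma rpow_deriv (c : ℝ) (hc : 1 ≤ c) (B : ℝ) (y : ℝ) :
    HasDerivAt (fun y : ℝ => c * B ^ (c-1) * y - y ^ c) (c * B ^ (c-1) - c * y ^ (c-1)) y := by
  have h1 : HasDerivAt (fun y : ℝ => c * B ^ (c-1) * y) (c * B ^ (c-1)) y := by
    simpa using (hasDerivAt_id y).const_mul (c * B ^ (c-1))
  have h2 : HasDerivAt (fun y : ℝ => y ^ c) (c * y ^ (c-1)) y :=
    Real.hasDerivAt_rpow_const (x := y) (p := c) (Or.inr hc)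
  exact h1.sub h2

lemma rpow_sub_le {c B r t : ℝ} (hc : 1 ≤ c) (hr : 0 < r) (hrt : r ≤ t) (htB : t ≤ B) :
    t ^ c - r ^ c ≤ c * B ^ (c - 1) * (t - r) := by
  set f : ℝ → ℝ := fun y => c * B ^ (c-1) * y - y ^ c with hf
  have hmono : MonotoneOn f (Set.Icc r B) := by
    apply monotoneOn_of_deriv_nonneg (convex_Icc r B)
    · exact (Continuous.continuousOn (by
        have : Continuous fun y : ℝ => y ^ c := Real.continuous_rpow_const (by linarith)
        fun_prop))
    · intro y _
      exact (rpow_deriv c hc B y).differentiableAt.differentiableWithinAt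
    · intro y hy
      rw [interior_Icc] at hy
      rw [(rpow_deriv c hc B y).deriv]
      have : y ^ (c-1) ≤ B ^ (c-1) :=
        Real.rpow_le_rpow (le_trans hr.le hy.1.le) hy.2.le (by linarith)
      nlinarith
  have := hmono (Set.mem_Icc.2 ⟨le_refl r, le_trans hrt htB⟩)
    (Set.mem_Icc.2 ⟨hrt, htB⟩) hrt
  simp only [hf] at this
  nlinarith

end Aux

noncomputable def J (X c : ℝ) (φ : ℝ → ℝ) : ℕ → ℝ → ℝ
  | 0 => φ
  | (m+1) => fun s => ∫ t in (X/2)..X, J X c φ m (s + t ^ c)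

section Jsec
open Real intervalIntegral

lemma J_cont (X c : ℝ) (hc : 0 < c) (φ : ℝ → ℝ) (hφ : Continuous φ) :
    ∀ m, Continuous (J X c φ m) := by
  intro m
  induction m with
  | zero => exact hφ
  | succ m ih =>
    show Continuous fun s => ∫ t in (X/2)..X, J X c φ m (s + t ^ c)
    apply intervalIntegral.continuous_parametric_intervalIntegral_of_continuous
      (f := fun s t => J X c φ m (s + t ^ c)) _ continuous_const
    exact ih.comp (continuous_fst.add
      ((Real.continuous_rpow_const hc.le).comp continuous_snd))

lemma J_nonneg (X c : ℝ) (hX : 0 ≤ X) (φ : ℝ → ℝ) (hφ0 : ∀ y, 0 ≤ φ y) :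
    ∀ m s, 0 ≤ J X c φ m s := by
  intro m
  induction m with
  | zero => exact hφ0
  | succ m ih =>
    intro s
    apply intervalIntegral.integral_nonneg (by linarith)
    intro t _
    exact ih _

set_option maxHeartbeats 1000000 in
lemma J_lower (c X : ℝ) (hc1 : 1 < c) (φ : ℝ → ℝ) (hφc : Continuous φ)
    (hφ0 : ∀ y, 0 ≤ φ y) (δ : ℝ) (hδ : 0 < δ) (hδ1 : δ ≤ 1)
    (hφ1 : ∀ y, |y| ≤ δ → φ y = 1)
    (hX : 100 ≤ X)
    (σ ν : ℝ) (hσ2 : 1/2 ≤ σ) (hσν1 : σ + ν ≤ 1) (hν : 0 < ν) :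
    ∀ m : ℕ, ∀ s : ℝ,
      ((3/5:ℝ)^c + m * (σ+ν)^c) * X^c ≤ -s →
      -s ≤ ((7/10:ℝ)^c + m * σ^c) * X^c →
      (ν*X)^m * (δ / (c * X^(c-1))) ≤ J X c φ (m+1) s := by
  have hc0 : (0:ℝ) < c := by linarith
  have hX0 : (0:ℝ) < X := by linarith
  have hXc1 : (1:ℝ) ≤ X ^ (c-1) := Real.one_le_rpow (by linarith) (by linarith)
  have hXc1' : (0:ℝ) < X ^ (c-1) := by linarith
  set ℓ : ℝ := δ / (c * X^(c-1)) with hℓ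
  have hℓ0 : 0 < ℓ := by positivity
  have hcX1 : (1:ℝ) ≤ c * X^(c-1) := by nlinarith
  have hℓδ : ℓ ≤ δ := by
    rw [hℓ, div_le_iff₀ (by positivity)]
    nlinarith
  have hℓ1 : ℓ ≤ 1 := le_trans hℓδ hδ1
  intro m
  induction m with
  | zero =>
    intro s h1 h2
    simp only [Nat.cast_zero, zero_mul, add_zero] at h1 h2
    set u : ℝ := -s with hu
    have hqX : (0:ℝ) < (3/5) * X := by linarith
    have hpX : (0:ℝ) < (7/10) * X := by linarith
    have hqc : ((3/5:ℝ) * X)^c = (3/5:ℝ)^c * X^c := Real.mul_rpow (by norm_num) hX0.le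
    have hpc : ((7/10:ℝ) * X)^c = (7/10:ℝ)^c * X^c := Real.mul_rpow (by norm_num) hX0.le
    have hu0 : 0 < u :=
      lt_of_lt_of_le (by positivity : (0:ℝ) < ((3/5)*X)^c) (by rw [hqc]; exact h1)
    set r : ℝ := u ^ (1/c) with hr
    have hrc : r ^ c = u := by
      rw [hr, ← Real.rpow_mul hu0.le, one_div, inv_mul_cancel₀ hc0.ne', Real.rpow_one]
    have h1' : ((3/5:ℝ)*X)^c ≤ u := by rw [hqc]; exact h1
    have h2' : u ≤ ((7/10:ℝ)*X)^c := by rw [hpc]; exact h2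
    have hrlow : (3/5)*X ≤ r := by
      have := Real.rpow_le_rpow (by positivity : (0:ℝ) ≤ ((3/5)*X)^c)
        h1' (by positivity : (0:ℝ) ≤ 1/c)
      rwa [← Real.rpow_mul hqX.le, mul_one_div, div_self hc0.ne', Real.rpow_one] at this
    have hrhigh : r ≤ (7/10)*X := by
      have := Real.rpow_le_rpow hu0.le h2' (by positivity : (0:ℝ) ≤ 1/c)
      rwa [← Real.rpow_mul hpX.le, mul_one_div, div_self hc0.ne', Real.rpow_one] at this
    have hr0 : 0 < r := lt_of_lt_of_le hqX hrlow
    have hrX2 : X/2 ≤ r := by linarith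
    have hrlX : r + ℓ ≤ X := by linarith
    have hIcc : ∀ t ∈ Set.Icc r (r+ℓ), φ (s + t^c) = 1 := by
      intro t ht
      apply hφ1
      have ha' : r^c ≤ t^c := Real.rpow_le_rpow hr0.le ht.1 hc0.le
      have hb' : t^c - r^c ≤ c * X^(c-1) * (t - r) :=
        rpow_sub_le hc1.le hr0 ht.1 (by linarith [ht.2])
      have hc' : c * X^(c-1) * (t - r) ≤ c * X^(c-1) * ℓ :=
        mul_le_mul_of_nonneg_left (by linarith [ht.2] : t - r ≤ ℓ) (by positivity)
      have hcXℓ : c * X^(c-1) * ℓ = δ := by rw [hℓ]; field_simp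
      rw [abs_le]
      constructor
      · linarith
      · linarith
    have hgc : Continuous fun t : ℝ => φ (s + t^c) :=
      hφc.comp (continuous_const.add (Real.continuous_rpow_const hc0.le))
    have hint : ∀ α β : ℝ, IntervalIntegrable (fun t => φ (s + t^c)) volume α β :=
      fun α β => hgc.intervalIntegrable _ _
    have e2 : (∫ t in r..(r+ℓ), φ (s + t^c)) + (∫ t in (r+ℓ)..X, φ (s + t^c))
        = ∫ t in r..X, φ (s + t^c) := integral_add_adjacent_intervals (hint _ _) (hint _ _)
    have e1 : (∫ t in (X/2)..r, φ (s + t^c)) + (∫ t in r..X, φ (s + t^c))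
        = ∫ t in (X/2)..X, φ (s + t^c) := integral_add_adjacent_intervals (hint _ _) (hint _ _)
    have n1 : 0 ≤ ∫ t in (X/2)..r, φ (s + t^c) :=
      intervalIntegral.integral_nonneg (by linarith) (fun u _ => hφ0 _)
    have n3 : 0 ≤ ∫ t in (r+ℓ)..X, φ (s + t^c) :=
      intervalIntegral.integral_nonneg (by linarith) (fun u _ => hφ0 _)
    have mid : (∫ t in r..(r+ℓ), φ (s + t^c)) = ℓ := by
      rw [intervalIntegral.integral_congr (g := fun _ => (1:ℝ))
        (fun t ht => hIcc t (by rwa [Set.uIcc_of_le (by linarith)] at ht))]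
      rw [intervalIntegral.integral_const, smul_eq_mul, mul_one]
      ring
    have : J X c φ 1 s = ∫ t in (X/2)..X, φ (s + t^c) := rfl
    rw [this, pow_zero, one_mul, ← e1, ← e2]
    linarith
  | succ m ih =>
    intro s h1 h2
    push_cast at h1 h2
    have hσX : X/2 ≤ σ*X := by nlinarith
    have hν0 : 0 ≤ ν := hν.le
    have hσνX : (σ+ν)*X ≤ X := by nlinarith
    have hσ0 : (0:ℝ) < σ := by linarith
    have hσνc : ((σ+ν)*X)^c = (σ+ν)^c * X^c := Real.mul_rpow (by linarith) hX0.le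
    have hσc : (σ*X)^c = σ^c * X^c := Real.mul_rpow (by linarith) hX0.le
    have hsub : ∀ t ∈ Set.Icc (σ*X) ((σ+ν)*X),
        (ν*X)^m * ℓ ≤ J X c φ (m+1) (s + t^c) := by
      intro t ht
      have ht0 : (0:ℝ) ≤ σ*X := by positivity
      have htc1 : t^c ≤ (σ+ν)^c * X^c := by
        rw [← hσνc]; exact Real.rpow_le_rpow (le_trans ht0 ht.1) ht.2 hc0.le
      have htc2 : σ^c * X^c ≤ t^c := by
        rw [← hσc]; exact Real.rpow_le_rpow ht0 ht.1 hc0.le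
      apply ih
      · push_cast; nlinarith
      · push_cast; nlinarith
    have hJc : Continuous fun t : ℝ => J X c φ (m+1) (s + t^c) :=
      (J_cont X c hc0 φ hφc (m+1)).comp
        (continuous_const.add (Real.continuous_rpow_const hc0.le))
    have hint : ∀ α β : ℝ, IntervalIntegrable (fun t => J X c φ (m+1) (s + t^c)) volume α β :=
      fun α β => hJc.intervalIntegrable _ _
    have hnn : ∀ u, 0 ≤ J X c φ (m+1) (s + u^c) :=
      fun u => J_nonneg X c hX0.le φ hφ0 _ _
    have e2 : (∫ t in (σ*X)..((σ+ν)*X), J X c φ (m+1) (s + t^c))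
        + (∫ t in ((σ+ν)*X)..X, J X c φ (m+1) (s + t^c))
        = ∫ t in (σ*X)..X, J X c φ (m+1) (s + t^c) :=
      integral_add_adjacent_intervals (hint _ _) (hint _ _)
    have e1 : (∫ t in (X/2)..(σ*X), J X c φ (m+1) (s + t^c))
        + (∫ t in (σ*X)..X, J X c φ (m+1) (s + t^c))
        = ∫ t in (X/2)..X, J X c φ (m+1) (s + t^c) :=
      integral_add_adjacent_intervals (hint _ _) (hint _ _)
    have n1 : 0 ≤ ∫ t in (X/2)..(σ*X), J X c φ (m+1) (s + t^c) :=
      intervalIntegral.integral_nonneg (by linarith) (fun u _ => hnn _)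
    have n3 : 0 ≤ ∫ t in ((σ+ν)*X)..X, J X c φ (m+1) (s + t^c) :=
      intervalIntegral.integral_nonneg (by nlinarith) (fun u _ => hnn _)
    have hσσν : σ*X ≤ (σ+ν)*X := by nlinarith
    have mid : ν*X * ((ν*X)^m * ℓ) ≤ ∫ t in (σ*X)..((σ+ν)*X), J X c φ (m+1) (s + t^c) := by
      have := intervalIntegral.integral_mono_on (f := fun _ => (ν*X)^m * ℓ)
        (g := fun t => J X c φ (m+1) (s + t^c)) hσσν
        (intervalIntegrable_const) (hint _ _) hsub
      rw [intervalIntegral.integral_const, smul_eq_mul] at this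
      calc ν*X * ((ν*X)^m * ℓ) = ((σ+ν)*X - σ*X) * ((ν*X)^m * ℓ) := by ring
      _ ≤ _ := this
    have hJdef : J X c φ (m+2) s = ∫ t in (X/2)..X, J X c φ (m+1) (s + t^c) := rfl
    rw [hJdef, ← e1, ← e2, pow_succ]
    nlinarith [hℓ0, pow_nonneg (by positivity : (0:ℝ) ≤ ν*X) m]

lemma Q_id (c : ℝ) (hc : 0 < c) (X : ℝ) (hX : 0 ≤ X) (φ : ℝ → ℝ) (Φ : ℝ → ℂ)
    (hΦi : Integrable Φ)
    (hinv : ∀ v : ℝ, ∫ x : ℝ, e (v * x) * Φ x = (φ v : ℂ)) :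
    ∀ (m : ℕ) (s : ℝ),
      (∫ x : ℝ, (I X c x) ^ m * (e (s * x) * Φ x)) = ((J X c φ m s : ℝ) : ℂ) := by
  intro m
  induction m with
  | zero =>
    intro s
    simp only [pow_zero, one_mul]
    exact hinv s
  | succ m ih =>
    intro s
    have hG : Integrable (fun x => e (s * x) * Φ x) := by
      apply MeasureTheory.Integrable.bdd_mul hΦi
        (e_continuous.comp (continuous_const.mul continuous_id)).aestronglyMeasurable
      exact ae_of_all _ (fun x => le_of_eq (e_norm _))
    rw [step c hc X hX m _ hG]
    have hpt : ∀ t : ℝ, (∫ x : ℝ, (I X c x) ^ m * (e (t ^ c * x) * (e (s * x) * Φ x)))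
        = ((J X c φ m (s + t ^ c) : ℝ) : ℂ) := by
      intro t
      rw [← ih (s + t ^ c)]
      congr 1
      funext x
      rw [show (s + t ^ c) * x = s * x + t ^ c * x by ring, e_add]
      ring
    calc (∫ t in (X/2)..X, ∫ x : ℝ, (I X c x) ^ m * (e (t ^ c * x) * (e (s * x) * Φ x)))
        = ∫ t in (X/2)..X, ((J X c φ m (s + t ^ c) : ℝ) : ℂ) := by
          apply intervalIntegral.integral_congr
          intro t _
          exact hpt t
    _ = ((∫ t in (X/2)..X, J X c φ m (s + t ^ c) : ℝ) : ℂ) := intervalIntegral.integral_ofReal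
    _ = ((J X c φ (m+1) s : ℝ) : ℂ) := rfl

end Jsec

set_option maxHeartbeats 1000000 in
/-- Lemma 2.4: for `1 < c < 3`, `c ≠ 2`, sufficiently large `N`, with
`X = (N/5)^{1/c}`, `ε = (log X)⁻²`, and a smoothing function `φ` as in Lemma 2.1 (with
`a = 9ε/10`, `b = ε/10`, `k = ⌈log X⌉`) with Fourier transform `Φ`, one has
`∫ I(x)⁶ e(−xN) Φ(x) dx ≫_c ε X^{6−c}` (the integral being real and positive). -/
theorem stmt6 (c : ℝ) (hc1 : 1 < c) (hc2 : c < 3) (hc3 : c ≠ 2) :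
    ∃ C > 0, ∃ N₀ : ℝ, ∀ N ≥ N₀,
    ∀ X ε : ℝ, ∀ k : ℕ, ∀ a b : ℝ,
      X = (N / 5) ^ (1 / c) → ε = ((Real.log X) ^ 2)⁻¹ → k = ⌈Real.log X⌉₊ →
      a = 9 * ε / 10 → b = ε / 10 →
    ∀ φ : ℝ → ℝ, ∀ Φ : ℝ → ℂ,
      ContDiff ℝ (k : ℕ∞) φ →
      (∀ y, |y| ≤ a - b → φ y = 1) →
      (∀ y, a - b < |y| → |y| < a + b → 0 < φ y ∧ φ y < 1) →
      (∀ y, a + b ≤ |y| → φ y = 0) →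
      (∀ x, Φ x = ∫ y : ℝ, e (-(x * y)) * (φ y : ℂ)) →
      (∀ x, ‖Φ x‖ ≤ 2 * a) →
      (∀ x : ℝ, x ≠ 0 → ‖Φ x‖ ≤
        min (1 / (Real.pi * |x|)) (1 / (Real.pi * |x|) * ((k : ℝ) / (2 * Real.pi * |x| * b)) ^ k)) →
      C * ε * X ^ (6 - c) ≤ (∫ x : ℝ, (I X c x) ^ 6 * e (-(x * N)) * Φ x).re := by
  have hc0 : (0:ℝ) < c := by linarith
  have hpc1 : (7/10:ℝ)^c < 7/10 := by
    have := Real.rpow_lt_rpow_of_exponent_gt (x := (7/10:ℝ)) (by norm_num) (by norm_num) hc1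
    rwa [Real.rpow_one] at this
  have hpc0 : (0:ℝ) < (7/10:ℝ)^c := Real.rpow_pos_of_pos (by norm_num) c
  have hqc0 : (0:ℝ) < (3/5:ℝ)^c := Real.rpow_pos_of_pos (by norm_num) c
  have hd : (3/5:ℝ)^c < (7/10:ℝ)^c :=
    Real.rpow_lt_rpow (by norm_num) (by norm_num) hc0
  set base : ℝ := (5 - (7/10:ℝ)^c)/5 with hbase_def
  have hbase_lb : 43/50 ≤ base := by rw [hbase_def]; linarith
  have hbase_ub : base < 1 := by rw [hbase_def]; linarith
  have hbase0 : 0 < base := by linarith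
  set σ : ℝ := base ^ (1/c) with hσ_def
  have hσc : σ ^ c = base := by
    rw [hσ_def, ← Real.rpow_mul hbase0.le, one_div, inv_mul_cancel₀ hc0.ne', Real.rpow_one]
  have hσlb : base ≤ σ := by
    have := Real.rpow_le_rpow_of_exponent_ge hbase0 hbase_ub.le
      (by rw [div_le_one hc0]; linarith : 1/c ≤ 1)
    rwa [Real.rpow_one] at this
  have hσ2 : 1/2 ≤ σ := by linarith
  have hσ1 : σ < 1 := Real.rpow_lt_one hbase0.le hbase_ub (by positivity)
  set d : ℝ := (7/10:ℝ)^c - (3/5:ℝ)^c with hd_def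
  have hd0 : 0 < d := by rw [hd_def]; linarith
  set ν : ℝ := min (d/(5*c)) ((1-σ)/2) with hν_def
  have hν0 : 0 < ν := by
    rw [hν_def]
    apply lt_min (by positivity) (by linarith)
  have hσν1 : σ + ν ≤ 1 := by
    have : ν ≤ (1-σ)/2 := min_le_right _ _
    linarith
  have hνd : ν ≤ d/(5*c) := min_le_left _ _
  have h3' : 5*σ^c = 5 - (7/10:ℝ)^c := by rw [hσc, hbase_def]; ring
  have h5σν : 5*(σ+ν)^c ≤ 5 - (3/5:ℝ)^c := by
    have hσ0 : (0:ℝ) < σ := by linarith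
    have h1 : (σ+ν)^c - σ^c ≤ c * (1:ℝ)^(c-1) * ((σ+ν) - σ) :=
      rpow_sub_le hc1.le hσ0 (by linarith) hσν1
    rw [Real.one_rpow, mul_one] at h1
    have h2 : c * ν ≤ d/5 := by
      have := mul_le_mul_of_nonneg_left hνd hc0.le
      calc c * ν ≤ c * (d/(5*c)) := this
      _ = d/5 := by field_simp
    rw [hd_def] at h2
    nlinarith
  refine ⟨ν^5 * 4 / (5*c), by positivity, 5 * (max (Real.exp 1) 100)^c, ?_⟩
  intro N hN X ε k a b hXdef hεdef hkdef hadef hbdef φ Φ hφsm h₂ h₃ h₄ hΦdef hB1 hB2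
  set X₀ : ℝ := max (Real.exp 1) 100 with hX₀_def
  have hX₀100 : (100:ℝ) ≤ X₀ := le_max_right _ _
  have hX₀e : Real.exp 1 ≤ X₀ := le_max_left _ _
  have hX₀0 : (0:ℝ) < X₀ := by linarith
  have hN5 : X₀^c ≤ N/5 := by
    have : 5 * X₀^c ≤ N := hN
    linarith
  have hXX₀ : X₀ ≤ X := by
    rw [hXdef]
    have h := Real.rpow_le_rpow (by positivity : (0:ℝ) ≤ X₀^c) hN5 (by positivity : (0:ℝ) ≤ 1/c)
    rwa [← Real.rpow_mul hX₀0.le, mul_one_div, div_self hc0.ne', Real.rpow_one] at h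
  have hX100 : (100:ℝ) ≤ X := by linarith
  have hX0 : (0:ℝ) < X := by linarith
  have hN50 : (0:ℝ) < N/5 := lt_of_lt_of_le (by positivity) hN5
  have hXc : X ^ c = N / 5 := by
    rw [hXdef, ← Real.rpow_mul hN50.le, one_div, inv_mul_cancel₀ hc0.ne', Real.rpow_one]
  have hNX : N = 5 * X^c := by rw [hXc]; ring
  have hXe : Real.exp 1 ≤ X := le_trans hX₀e hXX₀
  have hlog1 : 1 ≤ Real.log X := by
    have := Real.log_le_log (Real.exp_pos 1) hXe
    rwa [Real.log_exp] at this
  have hε0 : 0 < ε := by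
    have h : (0:ℝ) < (Real.log X)^2 := by nlinarith
    rw [hεdef]; exact inv_pos.2 h
  have hε1 : ε ≤ 1 := by
    have h : (1:ℝ) ≤ (Real.log X)^2 := by nlinarith
    rw [hεdef]; exact inv_le_one_of_one_le₀ h
  have hk1 : 1 ≤ k := by rw [hkdef]; exact Nat.one_le_ceil_iff.2 (by linarith)
  have ha0 : 0 ≤ a := by rw [hadef]; linarith
  have hb0 : 0 < b := by rw [hbdef]; linarith
  have hab2 : 0 < a + b := by rw [hadef, hbdef]; linarith
  have hδeq : a - b = 4*ε/5 := by rw [hadef, hbdef]; ring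
  have hδ0 : 0 < a - b := by rw [hδeq]; linarith
  have hδ1 : a - b ≤ 1 := by rw [hδeq]; linarith
  have hφc : Continuous φ := hφsm.continuous
  have hφ0 : ∀ y, 0 ≤ φ y := by
    intro y
    rcases le_or_gt |y| (a-b) with h|h
    · rw [h₂ y h]; norm_num
    · rcases lt_or_ge |y| (a+b) with h'|h'
      · exact (h₃ y h h').1.le
      · rw [h₄ y h']
  have hΦc : Continuous Φ := Phi_cont a b φ Φ hab2 hφc h₄ hΦdef
  have hΦi : Integrable Φ := Phi_integrable Φ hΦc k hk1 a b ha0 hb0 hB1 hB2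
  have hinv : ∀ v : ℝ, ∫ x : ℝ, e (v*x) * Φ x = (φ v : ℂ) :=
    inversion a b φ Φ hab2 hφc h₄ hΦdef hΦi
  have hpt : ∀ x : ℝ, (I X c x)^6 * e (-(x*N)) * Φ x
      = (I X c x)^6 * (e ((-N) * x) * Φ x) := by
    intro x
    rw [show -(x*N) = (-N)*x by ring]
    ring
  have hA : (∫ x : ℝ, (I X c x)^6 * e (-(x*N)) * Φ x) = ((J X c φ 6 (-N) : ℝ) : ℂ) := by
    simp only [hpt]
    exact Q_id c hc0 X hX0.le φ Φ hΦi hinv 6 (-N)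
  rw [hA, Complex.ofReal_re]
  have hXc0 : (0:ℝ) < X^c := Real.rpow_pos_of_pos hX0 c
  have hJ : (ν*X)^5 * ((a-b) / (c * X^(c-1))) ≤ J X c φ 6 (-N) := by
    have h := J_lower c X hc1 φ hφc hφ0 (a-b) hδ0 hδ1 h₂ hX100 σ ν hσ2 hσν1 hν0 5 (-N)
      (by
        rw [neg_neg]; push_cast
        have hcoef1 : (3/5:ℝ)^c + 5*(σ+ν)^c ≤ 5 := by linarith
        calc ((3/5:ℝ)^c + 5*(σ+ν)^c) * X^c ≤ 5 * X^c :=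
          mul_le_mul_of_nonneg_right hcoef1 hXc0.le
        _ = N := hNX.symm)
      (by
        rw [neg_neg]; push_cast
        have hcoef2 : (7/10:ℝ)^c + 5*σ^c = 5 := by linarith
        rw [hcoef2, ← hNX])
    exact h
  have hXc1' : (0:ℝ) < X^(c-1) := Real.rpow_pos_of_pos hX0 (c-1)
  calc ν^5 * 4 / (5*c) * ε * X^(6-c)
      = (ν*X)^5 * ((a-b) / (c * X^(c-1))) := by
        have hXpow : X^(6-c) = X^(5:ℕ) / X^(c-1) := by
          rw [eq_div_iff hXc1'.ne', ← Real.rpow_natCast X 5, ← Real.rpow_add hX0]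
          norm_num
        rw [hδeq, hXpow, mul_pow]
        field_simp
  _ ≤ J X c φ 6 (-N) := hJ
end

section
/- Let Ω₁ and Ω₂ be measurable subsets of ℝⁿ, let c ∈ L²(Ω₁, ℂ), ξ ∈ L²(Ω₂, ℂ), and let ω be a measurable complex-valued function on Ω₁ × Ω₂ such that sup_{x ∈ Ω₁} ∫_{Ω₂} |ω(x, y)| dy < +∞ and sup_{y ∈ Ω₂} ∫_{Ω₁} |ω(x, y)| dx < +∞. Then |∫_{Ω₁} c(x) ⟨ξ, ω(x, ·)⟩₂ dx| ≤ ‖ξ‖₂ · ‖c‖₁ · ( sup_{x′ ∈ Ω₁} ∫_{Ω₁} |⟨ω(x, ·), ω(x′, ·)⟩₂| dx )^{1/2}. -/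
open MeasureTheory
open scoped ENNReal NNReal

private lemma lintegral_cs {α : Type*} [MeasurableSpace α] (μ : Measure α) (u v w : α → ℝ≥0∞)
    (hu : AEMeasurable u μ) (hv : AEMeasurable v μ) (hw : AEMeasurable w μ) :
    ∫⁻ a, u a * v a * w a ∂μ ≤
      (∫⁻ a, u a ^ (2:ℝ) * w a ∂μ) ^ (1/2:ℝ) * (∫⁻ a, v a ^ (2:ℝ) * w a ∂μ) ^ (1/2:ℝ) := by
  have h22 : (2:ℝ).HolderConjugate 2 := Real.holderConjugate_iff.mpr ⟨one_lt_two, by norm_num⟩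
  have hw2 : AEMeasurable (fun a => w a ^ (1/2:ℝ)) μ := hw.pow aemeasurable_const
  have key := ENNReal.lintegral_mul_le_Lp_mul_Lq μ h22
    (f := fun a => u a * w a ^ (1/2:ℝ)) (g := fun a => v a * w a ^ (1/2:ℝ))
    (hu.mul hw2) (hv.mul hw2)
  have e1 : ∀ x : ℝ≥0∞, x ^ (1/2:ℝ) * x ^ (1/2:ℝ) = x := fun x => by
    rw [← ENNReal.rpow_add_of_nonneg _ _ (by norm_num) (by norm_num)]; norm_num
  have e2 : ∀ x : ℝ≥0∞, (x ^ (1/2:ℝ)) ^ (2:ℝ) = x := fun x => by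
    rw [← ENNReal.rpow_mul]; norm_num
  calc ∫⁻ a, u a * v a * w a ∂μ
      = ∫⁻ a, ((fun a => u a * w a ^ (1/2:ℝ)) * fun a => v a * w a ^ (1/2:ℝ)) a ∂μ := by
        refine lintegral_congr fun a => ?_
        simp only [Pi.mul_apply, mul_mul_mul_comm, e1]
    _ ≤ (∫⁻ a, (u a * w a ^ (1/2:ℝ)) ^ (2:ℝ) ∂μ) ^ (1/(2:ℝ)) *
        (∫⁻ a, (v a * w a ^ (1/2:ℝ)) ^ (2:ℝ) ∂μ) ^ (1/(2:ℝ)) := key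
    _ = (∫⁻ a, u a ^ (2:ℝ) * w a ∂μ) ^ (1/2:ℝ) * (∫⁻ a, v a ^ (2:ℝ) * w a ∂μ) ^ (1/2:ℝ) := by
        congr 1 <;>
        · congr 1
          refine lintegral_congr fun a => ?_
          rw [ENNReal.mul_rpow_of_nonneg _ _ (by norm_num), e2]

private lemma rpow_two_eq (r : ℝ) : r ^ (2:ℝ) = r ^ 2 := by
  rw [show (2:ℝ) = ((2:ℕ):ℝ) by norm_num, Real.rpow_natCast]

private lemma lint_sq_eq {α : Type*} [MeasurableSpace α] {μ : Measure α} {f : α → ℂ}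
    (hi : Integrable (fun x => ‖f x‖^2) μ) :
    ∫⁻ x, (‖f x‖₊ : ℝ≥0∞) ^ (2:ℝ) ∂μ = ENNReal.ofReal (∫ x, ‖f x‖^2 ∂μ) := by
  rw [ofReal_integral_eq_lintegral_ofReal hi (ae_of_all _ fun x => sq_nonneg _)]
  refine lintegral_congr fun x => ?_
  rw [← enorm_eq_nnnorm, ← ofReal_norm_eq_enorm, ENNReal.ofReal_rpow_of_nonneg (norm_nonneg _) (by norm_num),
    rpow_two_eq _]

set_option maxHeartbeats 1000000 in
/-- Lemma 2.6: for measurable `Ω₁, Ω₂ ⊆ ℝⁿ`, `c ∈ L²(Ω₁, ℂ)`,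
`ξ ∈ L²(Ω₂, ℂ)`, and a measurable kernel `ω` on `Ω₁ × Ω₂` with
`sup_{x∈Ω₁} ∫_{Ω₂} |ω(x,y)| dy < ∞` and `sup_{y∈Ω₂} ∫_{Ω₁} |ω(x,y)| dx < ∞`, one has
`|∫_{Ω₁} c(x) ⟨ξ, ω(x,·)⟩₂ dx| ≤ ‖ξ‖₂ ‖c‖₁ (sup_{x′∈Ω₁} ∫_{Ω₁} |⟨ω(x,·), ω(x′,·)⟩₂| dx)^{1/2}`,
the supremum being expressed through an arbitrary upper bound `B`. -/
theorem stmt8 (n : ℕ) (Ω₁ Ω₂ : Set (Fin n → ℝ))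
    (hΩ₁ : MeasurableSet Ω₁) (hΩ₂ : MeasurableSet Ω₂)
    (c ξ : (Fin n → ℝ) → ℂ)
    (hc : MemLp c 2 (volume.restrict Ω₁))
    (hξ : MemLp ξ 2 (volume.restrict Ω₂))
    (ω : (Fin n → ℝ) → (Fin n → ℝ) → ℂ)
    (hω : Measurable (fun p : (Fin n → ℝ) × (Fin n → ℝ) => ω p.1 p.2))
    (C₁ C₂ : ℝ)
    (hω1 : ∀ x ∈ Ω₁, (∫⁻ y in Ω₂, ENNReal.ofReal ‖ω x y‖) ≤ ENNReal.ofReal C₁)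
    (hω2 : ∀ y ∈ Ω₂, (∫⁻ x in Ω₁, ENNReal.ofReal ‖ω x y‖) ≤ ENNReal.ofReal C₂)
    (B : ℝ)
    (hB : ∀ x' ∈ Ω₁,
      (∫ x in Ω₁, ‖∫ y in Ω₂, ω x y * (starRingEnd ℂ) (ω x' y)‖) ≤ B) :
    ‖∫ x in Ω₁, c x * (∫ y in Ω₂, ξ y * (starRingEnd ℂ) (ω x y))‖ ≤
      Real.sqrt (∫ y in Ω₂, ‖ξ y‖ ^ 2) * Real.sqrt (∫ x in Ω₁, ‖c x‖ ^ 2) *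
        Real.sqrt B := by
  have e1 : ∀ x : ℝ≥0∞, x ^ (1/2:ℝ) * x ^ (1/2:ℝ) = x := fun x => by
    rw [← ENNReal.rpow_add_of_nonneg _ _ (by norm_num) (by norm_num)]; norm_num
  set μ := volume.restrict Ω₁ with hμdef
  set ν := volume.restrict Ω₂ with hνdef
  rcases Set.eq_empty_or_nonempty Ω₁ with hE | ⟨x₀, hx₀⟩
  · have hμ0 : μ = 0 := by rw [hμdef, hE, Measure.restrict_empty]
    rw [hμ0]
    simp
  have hB0 : 0 ≤ B := le_trans (integral_nonneg fun x => norm_nonneg _) (hB x₀ hx₀)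
  -- measurable representatives
  obtain ⟨c', hc'm, hcc'⟩ : ∃ g, StronglyMeasurable g ∧ c =ᵐ[μ] g :=
    ⟨hc.1.mk c, hc.1.stronglyMeasurable_mk, hc.1.ae_eq_mk⟩
  obtain ⟨ξ', hξ'm, hξξ'⟩ : ∃ g, StronglyMeasurable g ∧ ξ =ᵐ[ν] g :=
    ⟨hξ.1.mk ξ, hξ.1.stronglyMeasurable_mk, hξ.1.ae_eq_mk⟩
  have hc2 : MemLp c' 2 μ := hc.ae_eq hcc'
  have hξ2 : MemLp ξ' 2 ν := hξ.ae_eq hξξ'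
  have mc : Measurable c' := hc'm.measurable
  have mξ : Measurable ξ' := hξ'm.measurable
  have mconj : Measurable (starRingEnd ℂ) := by
    have : Continuous (starRingEnd ℂ) := continuous_star
    exact this.measurable
  -- rewrite the goal in terms of the representatives
  have g1 : (∫ x, c x * (∫ y, ξ y * (starRingEnd ℂ) (ω x y) ∂ν) ∂μ)
      = ∫ x, c' x * (∫ y, ξ' y * (starRingEnd ℂ) (ω x y) ∂ν) ∂μ := by
    have hin : ∀ x, (∫ y, ξ y * (starRingEnd ℂ) (ω x y) ∂ν)
        = ∫ y, ξ' y * (starRingEnd ℂ) (ω x y) ∂ν := fun x =>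
      integral_congr_ae (hξξ'.mono fun y hy => by simp only [hy])
    refine integral_congr_ae (hcc'.mono fun x hx => ?_)
    simp only [hx, hin x]
  have g2 : (∫ x, ‖c x‖ ^ 2 ∂μ) = ∫ x, ‖c' x‖ ^ 2 ∂μ :=
    integral_congr_ae (hcc'.mono fun x hx => by simp only [hx])
  have g3 : (∫ y, ‖ξ y‖ ^ 2 ∂ν) = ∫ y, ‖ξ' y‖ ^ 2 ∂ν :=
    integral_congr_ae (hξξ'.mono fun y hy => by simp only [hy])
  rw [g1, g2, g3]
  clear g1 g2 g3 hcc' hξξ' hc hξ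
  -- basic measurability
  have mW : Measurable fun p : (Fin n → ℝ) × (Fin n → ℝ) => (‖ω p.1 p.2‖₊ : ℝ≥0∞) := hω.enorm
  have mN : Measurable fun x => (‖c' x‖₊ : ℝ≥0∞) := mc.enorm
  have mM : Measurable fun y => (‖ξ' y‖₊ : ℝ≥0∞) := mξ.enorm
  have mωx : ∀ x, Measurable fun y => ω x y := fun x => hω.comp (measurable_prodMk_left)
  have mωy : ∀ y, Measurable fun x => ω x y := fun y => hω.comp (measurable_prodMk_right)
  set Xc : ℝ := ∫ x, ‖c' x‖ ^ 2 ∂μ with hXcdef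
  set Xξ : ℝ := ∫ y, ‖ξ' y‖ ^ 2 ∂ν with hXξdef
  have hXc0 : 0 ≤ Xc := integral_nonneg fun x => by positivity
  have hXξ0 : 0 ≤ Xξ := integral_nonneg fun y => by positivity
  have hXc : ∫⁻ x, (‖c' x‖₊ : ℝ≥0∞) ^ (2:ℝ) ∂μ = ENNReal.ofReal Xc := by
    refine lint_sq_eq ?_
    have := hc2.integrable_norm_rpow (by norm_num) (by norm_num)
    refine this.congr (ae_of_all _ fun x => ?_)
    show ‖c' x‖ ^ (2:ℝ≥0∞).toReal = ‖c' x‖ ^ 2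
    rw [ENNReal.toReal_ofNat, rpow_two_eq _]
  have hXξ : ∫⁻ y, (‖ξ' y‖₊ : ℝ≥0∞) ^ (2:ℝ) ∂ν = ENNReal.ofReal Xξ := by
    refine lint_sq_eq ?_
    have := hξ2.integrable_norm_rpow (by norm_num) (by norm_num)
    refine this.congr (ae_of_all _ fun y => ?_)
    show ‖ξ' y‖ ^ (2:ℝ≥0∞).toReal = ‖ξ' y‖ ^ 2
    rw [ENNReal.toReal_ofNat, rpow_two_eq _]
  -- nnnorm versions of the kernel bounds
  have hω1' : ∀ x ∈ Ω₁, (∫⁻ y, (‖ω x y‖₊ : ℝ≥0∞) ∂ν) ≤ ENNReal.ofReal C₁ := fun x hx => by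
    simpa only [ofReal_norm_eq_enorm, enorm_eq_nnnorm] using hω1 x hx
  have hω2' : ∀ y ∈ Ω₂, (∫⁻ x, (‖ω x y‖₊ : ℝ≥0∞) ∂μ) ≤ ENNReal.ofReal C₂ := fun y hy => by
    simpa only [ofReal_norm_eq_enorm, enorm_eq_nnnorm] using hω2 y hy
  -- pointwise (in y) Cauchy–Schwarz bound
  have hA : ∀ᵐ y ∂ν, ((∫⁻ x, (‖c' x‖₊ : ℝ≥0∞) * (‖ω x y‖₊ : ℝ≥0∞) ∂μ) ^ (2:ℝ))
      ≤ (∫⁻ x, (‖c' x‖₊ : ℝ≥0∞) ^ (2:ℝ) * (‖ω x y‖₊ : ℝ≥0∞) ∂μ) * ENNReal.ofReal C₂ := by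
    filter_upwards [ae_restrict_mem hΩ₂] with y hy
    have cs := lintegral_cs μ (fun x => (‖c' x‖₊ : ℝ≥0∞)) (fun _ => 1)
      (fun x => (‖ω x y‖₊ : ℝ≥0∞)) mN.aemeasurable aemeasurable_const
      ((mωy y).enorm.aemeasurable)
    simp only [mul_one, one_mul, ENNReal.one_rpow] at cs
    calc (∫⁻ x, (‖c' x‖₊ : ℝ≥0∞) * (‖ω x y‖₊ : ℝ≥0∞) ∂μ) ^ (2:ℝ)
        ≤ ((∫⁻ x, (‖c' x‖₊ : ℝ≥0∞) ^ (2:ℝ) * (‖ω x y‖₊ : ℝ≥0∞) ∂μ) ^ (1/2:ℝ) *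
          (∫⁻ x, (‖ω x y‖₊ : ℝ≥0∞) ∂μ) ^ (1/2:ℝ)) ^ (2:ℝ) :=
          ENNReal.rpow_le_rpow cs (by norm_num)
      _ = (∫⁻ x, (‖c' x‖₊ : ℝ≥0∞) ^ (2:ℝ) * (‖ω x y‖₊ : ℝ≥0∞) ∂μ) *
          (∫⁻ x, (‖ω x y‖₊ : ℝ≥0∞) ∂μ) := by
          rw [ENNReal.mul_rpow_of_nonneg _ _ (by norm_num), ← ENNReal.rpow_mul,
            ← ENNReal.rpow_mul]
          norm_num
      _ ≤ _ := mul_le_mul_right (hω2' y hy) _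
  -- first marginal bound
  have mNsqW : Measurable fun p : (Fin n → ℝ) × (Fin n → ℝ) =>
      (‖c' p.1‖₊ : ℝ≥0∞) ^ (2:ℝ) * (‖ω p.1 p.2‖₊ : ℝ≥0∞) :=
    ((mN.comp measurable_fst).pow_const _).mul mW
  have hT1 : ∫⁻ p : (Fin n → ℝ) × (Fin n → ℝ),
      (‖c' p.1‖₊ : ℝ≥0∞) ^ (2:ℝ) * (‖ω p.1 p.2‖₊ : ℝ≥0∞) ∂(μ.prod ν)
      ≤ ENNReal.ofReal Xc * ENNReal.ofReal C₁ := by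
    rw [MeasureTheory.lintegral_prod _ mNsqW.aemeasurable]
    calc ∫⁻ x, ∫⁻ y, (‖c' x‖₊ : ℝ≥0∞) ^ (2:ℝ) * (‖ω x y‖₊ : ℝ≥0∞) ∂ν ∂μ
        = ∫⁻ x, (‖c' x‖₊ : ℝ≥0∞) ^ (2:ℝ) * ∫⁻ y, (‖ω x y‖₊ : ℝ≥0∞) ∂ν ∂μ :=
          lintegral_congr fun x => lintegral_const_mul'' _ ((mωx x).enorm.aemeasurable)
      _ ≤ ∫⁻ x, (‖c' x‖₊ : ℝ≥0∞) ^ (2:ℝ) * ENNReal.ofReal C₁ ∂μ := by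
          refine lintegral_mono_ae ?_
          filter_upwards [ae_restrict_mem hΩ₁] with x hx
          exact mul_le_mul_right (hω1' x hx) _
      _ = (∫⁻ x, (‖c' x‖₊ : ℝ≥0∞) ^ (2:ℝ) ∂μ) * ENNReal.ofReal C₁ :=
          lintegral_mul_const'' _ ((mN.pow_const _).aemeasurable)
      _ = ENNReal.ofReal Xc * ENNReal.ofReal C₁ := by rw [hXc]
  have hCore : ∫⁻ y, ((∫⁻ x, (‖c' x‖₊ : ℝ≥0∞) * (‖ω x y‖₊ : ℝ≥0∞) ∂μ) ^ (2:ℝ)) ∂ν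
      ≤ ENNReal.ofReal Xc * ENNReal.ofReal C₁ * ENNReal.ofReal C₂ := by
    calc ∫⁻ y, ((∫⁻ x, (‖c' x‖₊ : ℝ≥0∞) * (‖ω x y‖₊ : ℝ≥0∞) ∂μ) ^ (2:ℝ)) ∂ν
        ≤ ∫⁻ y, (∫⁻ x, (‖c' x‖₊ : ℝ≥0∞) ^ (2:ℝ) * (‖ω x y‖₊ : ℝ≥0∞) ∂μ) *
            ENNReal.ofReal C₂ ∂ν := lintegral_mono_ae hA
      _ = (∫⁻ y, ∫⁻ x, (‖c' x‖₊ : ℝ≥0∞) ^ (2:ℝ) * (‖ω x y‖₊ : ℝ≥0∞) ∂μ ∂ν) *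
            ENNReal.ofReal C₂ :=
          lintegral_mul_const'' _ (mNsqW.lintegral_prod_left').aemeasurable
      _ = (∫⁻ p : (Fin n → ℝ) × (Fin n → ℝ),
            (‖c' p.1‖₊ : ℝ≥0∞) ^ (2:ℝ) * (‖ω p.1 p.2‖₊ : ℝ≥0∞) ∂(μ.prod ν)) *
            ENNReal.ofReal C₂ := by
          rw [MeasureTheory.lintegral_prod_symm _ mNsqW.aemeasurable]
      _ ≤ ENNReal.ofReal Xc * ENNReal.ofReal C₁ * ENNReal.ofReal C₂ :=
          mul_le_mul_left hT1 _
  -- the kernel K and the function h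
  set K : (Fin n → ℝ) → (Fin n → ℝ) → ℂ :=
    fun x x' => ∫ y, ω x y * (starRingEnd ℂ) (ω x' y) ∂ν with hKdef
  set h : (Fin n → ℝ) → ℂ := fun y => ∫ x, c' x * (starRingEnd ℂ) (ω x y) ∂μ with hhdef
  have mK : Measurable fun p : (Fin n → ℝ) × (Fin n → ℝ) => K p.1 p.2 := by
    have : Measurable fun q : ((Fin n → ℝ) × (Fin n → ℝ)) × (Fin n → ℝ) =>
        ω q.1.1 q.2 * (starRingEnd ℂ) (ω q.1.2 q.2) :=
      (hω.comp (measurable_fst.fst.prodMk measurable_snd)).mul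
        (mconj.comp (hω.comp (measurable_fst.snd.prodMk measurable_snd)))
    exact (this.stronglyMeasurable.integral_prod_right').measurable
  have mh : StronglyMeasurable h := by
    have : Measurable fun q : (Fin n → ℝ) × (Fin n → ℝ) =>
        c' q.2 * (starRingEnd ℂ) (ω q.2 q.1) :=
      (mc.comp measurable_snd).mul
        (mconj.comp (hω.comp (measurable_snd.prodMk measurable_fst)))
    exact this.stronglyMeasurable.integral_prod_right'
  have hKsymm : ∀ x x', (‖K x x'‖₊ : ℝ≥0∞) = (‖K x' x‖₊ : ℝ≥0∞) := by
    intro x x'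
    have hKc : K x' x = (starRingEnd ℂ) (K x x') := by
      rw [hKdef]
      dsimp only
      rw [← integral_conj]
      refine integral_congr_ae (ae_of_all _ fun y => ?_)
      simp only [map_mul, Complex.conj_conj, mul_comm]
    rw [hKc, RCLike.nnnorm_conj]
  have hK5 : ∀ x' ∈ Ω₁, ∫⁻ x, (‖K x x'‖₊ : ℝ≥0∞) ∂μ ≤ ENNReal.ofReal B := by
    intro x' hx'
    have hfin : ∫⁻ x, (‖K x x'‖₊ : ℝ≥0∞) ∂μ ≤ ENNReal.ofReal C₂ * ENNReal.ofReal C₁ := by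
      calc ∫⁻ x, (‖K x x'‖₊ : ℝ≥0∞) ∂μ
          ≤ ∫⁻ x, ∫⁻ y, (‖ω x y * (starRingEnd ℂ) (ω x' y)‖₊ : ℝ≥0∞) ∂ν ∂μ :=
            lintegral_mono fun x => enorm_integral_le_lintegral_enorm _
        _ = ∫⁻ x, ∫⁻ y, (‖ω x y‖₊ : ℝ≥0∞) * (‖ω x' y‖₊ : ℝ≥0∞) ∂ν ∂μ := by
            refine lintegral_congr fun x => lintegral_congr fun y => ?_
            rw [nnnorm_mul, RCLike.nnnorm_conj, ENNReal.coe_mul]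
        _ = ∫⁻ y, ∫⁻ x, (‖ω x y‖₊ : ℝ≥0∞) * (‖ω x' y‖₊ : ℝ≥0∞) ∂μ ∂ν := by
            refine lintegral_lintegral_swap ?_
            exact (mW.mul (((mωx x').comp measurable_snd).enorm)).aemeasurable
        _ = ∫⁻ y, (∫⁻ x, (‖ω x y‖₊ : ℝ≥0∞) ∂μ) * (‖ω x' y‖₊ : ℝ≥0∞) ∂ν :=
            lintegral_congr fun y => lintegral_mul_const'' _ ((mωy y).enorm.aemeasurable)
        _ ≤ ∫⁻ y, ENNReal.ofReal C₂ * (‖ω x' y‖₊ : ℝ≥0∞) ∂ν := by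
            refine lintegral_mono_ae ?_
            filter_upwards [ae_restrict_mem hΩ₂] with y hy
            exact mul_le_mul_left (hω2' y hy) _
        _ = ENNReal.ofReal C₂ * ∫⁻ y, (‖ω x' y‖₊ : ℝ≥0∞) ∂ν :=
            lintegral_const_mul'' _ ((mωx x').enorm.aemeasurable)
        _ ≤ ENNReal.ofReal C₂ * ENNReal.ofReal C₁ := mul_le_mul_right (hω1' x' hx') _
    have hKint : Integrable (fun x => K x x') μ := by
      constructor
      · exact ((mK.comp (measurable_id.prodMk measurable_const)).stronglyMeasurable).aestronglyMeasurable
      · exact lt_of_le_of_lt hfin (by finiteness)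
    calc ∫⁻ x, (‖K x x'‖₊ : ℝ≥0∞) ∂μ
        = ENNReal.ofReal (∫ x, ‖K x x'‖ ∂μ) :=
          (ofReal_integral_norm_eq_lintegral_enorm hKint).symm
      _ ≤ ENNReal.ofReal B := ENNReal.ofReal_le_ofReal (hB x' hx')
  have hK4 : ∀ x ∈ Ω₁, ∫⁻ x', (‖K x x'‖₊ : ℝ≥0∞) ∂μ ≤ ENNReal.ofReal B := fun x hx => by
    calc ∫⁻ x', (‖K x x'‖₊ : ℝ≥0∞) ∂μ = ∫⁻ x', (‖K x' x‖₊ : ℝ≥0∞) ∂μ :=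
          lintegral_congr fun x' => hKsymm x x'
      _ ≤ ENNReal.ofReal B := hK5 x hx
  -- the key double-kernel bound
  have mKn : Measurable fun p : (Fin n → ℝ) × (Fin n → ℝ) => (‖K p.1 p.2‖₊ : ℝ≥0∞) :=
    mK.enorm
  have hJ : ∫⁻ p : (Fin n → ℝ) × (Fin n → ℝ),
      (‖c' p.1‖₊ : ℝ≥0∞) * (‖c' p.2‖₊ : ℝ≥0∞) * (‖K p.1 p.2‖₊ : ℝ≥0∞) ∂(μ.prod μ)
      ≤ ENNReal.ofReal Xc * ENNReal.ofReal B := by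
    have cs := lintegral_cs (μ.prod μ) (fun p => (‖c' p.1‖₊ : ℝ≥0∞))
      (fun p => (‖c' p.2‖₊ : ℝ≥0∞)) (fun p => (‖K p.1 p.2‖₊ : ℝ≥0∞))
      (mN.comp measurable_fst).aemeasurable (mN.comp measurable_snd).aemeasurable
      mKn.aemeasurable
    have m1 : Measurable fun p : (Fin n → ℝ) × (Fin n → ℝ) =>
        (‖c' p.1‖₊ : ℝ≥0∞) ^ (2:ℝ) * (‖K p.1 p.2‖₊ : ℝ≥0∞) :=
      ((mN.comp measurable_fst).pow_const _).mul mKn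
    have m2 : Measurable fun p : (Fin n → ℝ) × (Fin n → ℝ) =>
        (‖c' p.2‖₊ : ℝ≥0∞) ^ (2:ℝ) * (‖K p.1 p.2‖₊ : ℝ≥0∞) :=
      ((mN.comp measurable_snd).pow_const _).mul mKn
    have t1 : ∫⁻ p : (Fin n → ℝ) × (Fin n → ℝ),
        (‖c' p.1‖₊ : ℝ≥0∞) ^ (2:ℝ) * (‖K p.1 p.2‖₊ : ℝ≥0∞) ∂(μ.prod μ)
        ≤ ENNReal.ofReal Xc * ENNReal.ofReal B := by
      rw [MeasureTheory.lintegral_prod _ m1.aemeasurable]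
      calc ∫⁻ x, ∫⁻ x', (‖c' x‖₊ : ℝ≥0∞) ^ (2:ℝ) * (‖K x x'‖₊ : ℝ≥0∞) ∂μ ∂μ
          = ∫⁻ x, (‖c' x‖₊ : ℝ≥0∞) ^ (2:ℝ) * ∫⁻ x', (‖K x x'‖₊ : ℝ≥0∞) ∂μ ∂μ :=
            lintegral_congr fun x => lintegral_const_mul'' _
              ((mK.comp (measurable_const.prodMk measurable_id)).enorm.aemeasurable)
        _ ≤ ∫⁻ x, (‖c' x‖₊ : ℝ≥0∞) ^ (2:ℝ) * ENNReal.ofReal B ∂μ := by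
            refine lintegral_mono_ae ?_
            filter_upwards [ae_restrict_mem hΩ₁] with x hx
            exact mul_le_mul_right (hK4 x hx) _
        _ = (∫⁻ x, (‖c' x‖₊ : ℝ≥0∞) ^ (2:ℝ) ∂μ) * ENNReal.ofReal B :=
            lintegral_mul_const'' _ ((mN.pow_const _).aemeasurable)
        _ = ENNReal.ofReal Xc * ENNReal.ofReal B := by rw [hXc]
    have t2 : ∫⁻ p : (Fin n → ℝ) × (Fin n → ℝ),
        (‖c' p.2‖₊ : ℝ≥0∞) ^ (2:ℝ) * (‖K p.1 p.2‖₊ : ℝ≥0∞) ∂(μ.prod μ)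
        ≤ ENNReal.ofReal Xc * ENNReal.ofReal B := by
      rw [MeasureTheory.lintegral_prod_symm _ m2.aemeasurable]
      calc ∫⁻ x', ∫⁻ x, (‖c' x'‖₊ : ℝ≥0∞) ^ (2:ℝ) * (‖K x x'‖₊ : ℝ≥0∞) ∂μ ∂μ
          = ∫⁻ x', (‖c' x'‖₊ : ℝ≥0∞) ^ (2:ℝ) * ∫⁻ x, (‖K x x'‖₊ : ℝ≥0∞) ∂μ ∂μ :=
            lintegral_congr fun x' => lintegral_const_mul'' _
              ((mK.comp (measurable_id.prodMk measurable_const)).enorm.aemeasurable)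
        _ ≤ ∫⁻ x', (‖c' x'‖₊ : ℝ≥0∞) ^ (2:ℝ) * ENNReal.ofReal B ∂μ := by
            refine lintegral_mono_ae ?_
            filter_upwards [ae_restrict_mem hΩ₁] with x' hx'
            exact mul_le_mul_right (hK5 x' hx') _
        _ = (∫⁻ x', (‖c' x'‖₊ : ℝ≥0∞) ^ (2:ℝ) ∂μ) * ENNReal.ofReal B :=
            lintegral_mul_const'' _ ((mN.pow_const _).aemeasurable)
        _ = ENNReal.ofReal Xc * ENNReal.ofReal B := by rw [hXc]
    calc ∫⁻ p : (Fin n → ℝ) × (Fin n → ℝ),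
        (‖c' p.1‖₊ : ℝ≥0∞) * (‖c' p.2‖₊ : ℝ≥0∞) * (‖K p.1 p.2‖₊ : ℝ≥0∞) ∂(μ.prod μ)
        ≤ (∫⁻ p : (Fin n → ℝ) × (Fin n → ℝ),
            (‖c' p.1‖₊ : ℝ≥0∞) ^ (2:ℝ) * (‖K p.1 p.2‖₊ : ℝ≥0∞) ∂(μ.prod μ)) ^ (1/2:ℝ) *
          (∫⁻ p : (Fin n → ℝ) × (Fin n → ℝ),
            (‖c' p.2‖₊ : ℝ≥0∞) ^ (2:ℝ) * (‖K p.1 p.2‖₊ : ℝ≥0∞) ∂(μ.prod μ)) ^ (1/2:ℝ) := cs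
      _ ≤ (ENNReal.ofReal Xc * ENNReal.ofReal B) ^ (1/2:ℝ) *
          (ENNReal.ofReal Xc * ENNReal.ofReal B) ^ (1/2:ℝ) :=
          mul_le_mul' (ENNReal.rpow_le_rpow t1 (by norm_num))
            (ENNReal.rpow_le_rpow t2 (by norm_num))
      _ = ENNReal.ofReal Xc * ENNReal.ofReal B := e1 _
  -- integrability of the triple-product kernel
  have mG : Measurable fun q : ((Fin n → ℝ) × (Fin n → ℝ)) × (Fin n → ℝ) =>
      (c' q.1.1 * (starRingEnd ℂ) (ω q.1.1 q.2)) * ((starRingEnd ℂ) (c' q.1.2) * ω q.1.2 q.2) :=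
    ((mc.comp measurable_fst.fst).mul
      (mconj.comp (hω.comp (measurable_fst.fst.prodMk measurable_snd)))).mul
      (((mconj.comp (mc.comp measurable_fst.snd))).mul
        (hω.comp (measurable_fst.snd.prodMk measurable_snd)))
  have mGn : Measurable fun q : ((Fin n → ℝ) × (Fin n → ℝ)) × (Fin n → ℝ) =>
      ((‖c' q.1.1‖₊ : ℝ≥0∞) * (‖ω q.1.1 q.2‖₊ : ℝ≥0∞)) *
        ((‖c' q.1.2‖₊ : ℝ≥0∞) * (‖ω q.1.2 q.2‖₊ : ℝ≥0∞)) :=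
    (((mN.comp measurable_fst.fst).mul
        (hω.comp (measurable_fst.fst.prodMk measurable_snd)).enorm).mul
      ((mN.comp measurable_fst.snd).mul
        (hω.comp (measurable_fst.snd.prodMk measurable_snd)).enorm))
  have hGfin : ∫⁻ q : ((Fin n → ℝ) × (Fin n → ℝ)) × (Fin n → ℝ),
      ((‖c' q.1.1‖₊ : ℝ≥0∞) * (‖ω q.1.1 q.2‖₊ : ℝ≥0∞)) *
        ((‖c' q.1.2‖₊ : ℝ≥0∞) * (‖ω q.1.2 q.2‖₊ : ℝ≥0∞)) ∂((μ.prod μ).prod ν)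
      ≤ ENNReal.ofReal Xc * ENNReal.ofReal C₁ * ENNReal.ofReal C₂ := by
    rw [MeasureTheory.lintegral_prod_symm _ mGn.aemeasurable]
    calc ∫⁻ y, ∫⁻ p : (Fin n → ℝ) × (Fin n → ℝ),
          ((‖c' p.1‖₊ : ℝ≥0∞) * (‖ω p.1 y‖₊ : ℝ≥0∞)) *
            ((‖c' p.2‖₊ : ℝ≥0∞) * (‖ω p.2 y‖₊ : ℝ≥0∞)) ∂(μ.prod μ) ∂ν
        = ∫⁻ y, (∫⁻ x, (‖c' x‖₊ : ℝ≥0∞) * (‖ω x y‖₊ : ℝ≥0∞) ∂μ) *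
            (∫⁻ x, (‖c' x‖₊ : ℝ≥0∞) * (‖ω x y‖₊ : ℝ≥0∞) ∂μ) ∂ν := by
          refine lintegral_congr fun y => ?_
          exact lintegral_prod_mul (f := fun x => (‖c' x‖₊ : ℝ≥0∞) * (‖ω x y‖₊ : ℝ≥0∞))
            (g := fun x => (‖c' x‖₊ : ℝ≥0∞) * (‖ω x y‖₊ : ℝ≥0∞))
            (mN.mul (mωy y).enorm).aemeasurable (mN.mul (mωy y).enorm).aemeasurable
      _ = ∫⁻ y, (∫⁻ x, (‖c' x‖₊ : ℝ≥0∞) * (‖ω x y‖₊ : ℝ≥0∞) ∂μ) ^ (2:ℝ) ∂ν := by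
          refine lintegral_congr fun y => ?_
          rw [show (2:ℝ) = ((2:ℕ):ℝ) by norm_num, ENNReal.rpow_natCast]
          exact (pow_two _).symm
      _ ≤ ENNReal.ofReal Xc * ENNReal.ofReal C₁ * ENNReal.ofReal C₂ := hCore
  have hG : Integrable (fun q : ((Fin n → ℝ) × (Fin n → ℝ)) × (Fin n → ℝ) =>
      (c' q.1.1 * (starRingEnd ℂ) (ω q.1.1 q.2)) * ((starRingEnd ℂ) (c' q.1.2) * ω q.1.2 q.2))
      ((μ.prod μ).prod ν) := by
    constructor
    · exact mG.aestronglyMeasurable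
    · refine lt_of_le_of_lt ?_ (lt_of_le_of_lt hGfin (by finiteness))
      refine lintegral_mono fun q => ?_
      simp only [enorm_eq_nnnorm, nnnorm_mul, RCLike.nnnorm_conj, ENNReal.coe_mul]
      exact le_refl _
  -- Step 3 : ∫ ‖h‖² ≤ Xc * B
  have hconjh : ∀ y, (starRingEnd ℂ) (h y) = ∫ x, (starRingEnd ℂ) (c' x) * ω x y ∂μ := by
    intro y
    rw [hhdef]
    dsimp only
    rw [← integral_conj]
    refine integral_congr_ae (ae_of_all _ fun x => ?_)
    simp only [map_mul, Complex.conj_conj]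
  have hexp : ∀ y, h y * (starRingEnd ℂ) (h y)
      = ∫ p : (Fin n → ℝ) × (Fin n → ℝ),
          (c' p.1 * (starRingEnd ℂ) (ω p.1 y)) * ((starRingEnd ℂ) (c' p.2) * ω p.2 y)
          ∂(μ.prod μ) := by
    intro y
    rw [hconjh y, hhdef]
    exact (integral_prod_mul (f := fun x => c' x * (starRingEnd ℂ) (ω x y))
      (g := fun x => (starRingEnd ℂ) (c' x) * ω x y)).symm
  have hintc : Integrable (fun y => h y * (starRingEnd ℂ) (h y)) ν :=
    (hG.integral_prod_right).congr (ae_of_all _ fun y => (hexp y).symm)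
  have hre : ∫ y, ‖h y‖ ^ 2 ∂ν = (∫ y, h y * (starRingEnd ℂ) (h y) ∂ν).re := by
    have h1 := integral_re hintc
    have h2 : (∫ y, h y * (starRingEnd ℂ) (h y) ∂ν).re
        = RCLike.re (K := ℂ) (∫ y, h y * (starRingEnd ℂ) (h y) ∂ν) := rfl
    rw [h2, ← h1]
    refine integral_congr_ae (ae_of_all _ fun y => ?_)
    show ‖h y‖ ^ 2 = RCLike.re (h y * (starRingEnd ℂ) (h y))
    rw [Complex.mul_conj]
    simp [RCLike.re_to_complex, Complex.normSq_eq_norm_sq,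
      ← Complex.ofReal_pow, Complex.ofReal_re]
  have hswap : ∫ y, h y * (starRingEnd ℂ) (h y) ∂ν
      = ∫ p : (Fin n → ℝ) × (Fin n → ℝ),
          c' p.1 * (starRingEnd ℂ) (c' p.2) * (starRingEnd ℂ) (K p.1 p.2) ∂(μ.prod μ) := by
    calc ∫ y, h y * (starRingEnd ℂ) (h y) ∂ν
        = ∫ y, ∫ p : (Fin n → ℝ) × (Fin n → ℝ),
            (c' p.1 * (starRingEnd ℂ) (ω p.1 y)) * ((starRingEnd ℂ) (c' p.2) * ω p.2 y)
            ∂(μ.prod μ) ∂ν := integral_congr_ae (ae_of_all _ hexp)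
      _ = ∫ p : (Fin n → ℝ) × (Fin n → ℝ), ∫ y,
            (c' p.1 * (starRingEnd ℂ) (ω p.1 y)) * ((starRingEnd ℂ) (c' p.2) * ω p.2 y)
            ∂ν ∂(μ.prod μ) := (MeasureTheory.integral_integral_swap hG).symm
      _ = ∫ p : (Fin n → ℝ) × (Fin n → ℝ),
            c' p.1 * (starRingEnd ℂ) (c' p.2) * (starRingEnd ℂ) (K p.1 p.2) ∂(μ.prod μ) := by
          refine integral_congr_ae (ae_of_all _ fun p => ?_)
          have hptw : ∀ y, (c' p.1 * (starRingEnd ℂ) (ω p.1 y)) *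
              ((starRingEnd ℂ) (c' p.2) * ω p.2 y)
              = (c' p.1 * (starRingEnd ℂ) (c' p.2)) *
                ((starRingEnd ℂ) (ω p.1 y) * ω p.2 y) := fun y => by ring
          show (∫ y, (c' p.1 * (starRingEnd ℂ) (ω p.1 y)) *
              ((starRingEnd ℂ) (c' p.2) * ω p.2 y) ∂ν) = _
          rw [integral_congr_ae (ae_of_all _ hptw), integral_const_mul]
          congr 1
          rw [hKdef]
          dsimp only
          rw [← integral_conj]
          refine integral_congr_ae (ae_of_all _ fun y => ?_)
          simp only [map_mul, Complex.conj_conj]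
  have hstep3 : ∫ y, ‖h y‖ ^ 2 ∂ν ≤ Xc * B := by
    rw [hre, hswap]
    have hb1 : (∫ p : (Fin n → ℝ) × (Fin n → ℝ),
        c' p.1 * (starRingEnd ℂ) (c' p.2) * (starRingEnd ℂ) (K p.1 p.2) ∂(μ.prod μ)).re
        ≤ ‖∫ p : (Fin n → ℝ) × (Fin n → ℝ),
            c' p.1 * (starRingEnd ℂ) (c' p.2) * (starRingEnd ℂ) (K p.1 p.2) ∂(μ.prod μ)‖ := by
      exact Complex.re_le_norm _
    have hb2 : (‖∫ p : (Fin n → ℝ) × (Fin n → ℝ),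
        c' p.1 * (starRingEnd ℂ) (c' p.2) * (starRingEnd ℂ) (K p.1 p.2) ∂(μ.prod μ)‖₊ : ℝ≥0∞)
        ≤ ∫⁻ p : (Fin n → ℝ) × (Fin n → ℝ),
            (‖c' p.1‖₊ : ℝ≥0∞) * (‖c' p.2‖₊ : ℝ≥0∞) * (‖K p.1 p.2‖₊ : ℝ≥0∞) ∂(μ.prod μ) := by
      refine le_trans (enorm_integral_le_lintegral_enorm _) ?_
      refine lintegral_mono fun p => ?_
      simp only [enorm_eq_nnnorm, nnnorm_mul, RCLike.nnnorm_conj, ENNReal.coe_mul]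
      exact le_refl _
    have hfin2 : ∫⁻ p : (Fin n → ℝ) × (Fin n → ℝ),
        (‖c' p.1‖₊ : ℝ≥0∞) * (‖c' p.2‖₊ : ℝ≥0∞) * (‖K p.1 p.2‖₊ : ℝ≥0∞) ∂(μ.prod μ) ≠ ⊤ :=
      (lt_of_le_of_lt hJ (by finiteness)).ne
    calc (∫ p : (Fin n → ℝ) × (Fin n → ℝ),
        c' p.1 * (starRingEnd ℂ) (c' p.2) * (starRingEnd ℂ) (K p.1 p.2) ∂(μ.prod μ)).re
        ≤ ‖∫ p : (Fin n → ℝ) × (Fin n → ℝ),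
            c' p.1 * (starRingEnd ℂ) (c' p.2) * (starRingEnd ℂ) (K p.1 p.2) ∂(μ.prod μ)‖ := hb1
      _ = ((‖∫ p : (Fin n → ℝ) × (Fin n → ℝ),
            c' p.1 * (starRingEnd ℂ) (c' p.2) * (starRingEnd ℂ) (K p.1 p.2) ∂(μ.prod μ)‖₊ : ℝ≥0∞)).toReal := by
          simp [ENNReal.coe_toReal, coe_nnnorm]
      _ ≤ (∫⁻ p : (Fin n → ℝ) × (Fin n → ℝ),
            (‖c' p.1‖₊ : ℝ≥0∞) * (‖c' p.2‖₊ : ℝ≥0∞) * (‖K p.1 p.2‖₊ : ℝ≥0∞) ∂(μ.prod μ)).toReal :=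
          ENNReal.toReal_mono hfin2 hb2
      _ ≤ (ENNReal.ofReal Xc * ENNReal.ofReal B).toReal :=
          ENNReal.toReal_mono (by finiteness) hJ
      _ = Xc * B := by
          rw [ENNReal.toReal_mul, ENNReal.toReal_ofReal hXc0, ENNReal.toReal_ofReal hB0]
  -- second marginal bound
  have mMW : Measurable fun p : (Fin n → ℝ) × (Fin n → ℝ) =>
      (‖ξ' p.2‖₊ : ℝ≥0∞) ^ (2:ℝ) * (‖ω p.1 p.2‖₊ : ℝ≥0∞) :=
    ((mM.comp measurable_snd).pow_const _).mul mW
  have hT2 : ∫⁻ p : (Fin n → ℝ) × (Fin n → ℝ),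
      (‖ξ' p.2‖₊ : ℝ≥0∞) ^ (2:ℝ) * (‖ω p.1 p.2‖₊ : ℝ≥0∞) ∂(μ.prod ν)
      ≤ ENNReal.ofReal Xξ * ENNReal.ofReal C₂ := by
    rw [MeasureTheory.lintegral_prod_symm _ mMW.aemeasurable]
    calc ∫⁻ y, ∫⁻ x, (‖ξ' y‖₊ : ℝ≥0∞) ^ (2:ℝ) * (‖ω x y‖₊ : ℝ≥0∞) ∂μ ∂ν
        = ∫⁻ y, (‖ξ' y‖₊ : ℝ≥0∞) ^ (2:ℝ) * ∫⁻ x, (‖ω x y‖₊ : ℝ≥0∞) ∂μ ∂ν :=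
          lintegral_congr fun y => lintegral_const_mul'' _ ((mωy y).enorm.aemeasurable)
      _ ≤ ∫⁻ y, (‖ξ' y‖₊ : ℝ≥0∞) ^ (2:ℝ) * ENNReal.ofReal C₂ ∂ν := by
          refine lintegral_mono_ae ?_
          filter_upwards [ae_restrict_mem hΩ₂] with y hy
          exact mul_le_mul_right (hω2' y hy) _
      _ = (∫⁻ y, (‖ξ' y‖₊ : ℝ≥0∞) ^ (2:ℝ) ∂ν) * ENNReal.ofReal C₂ :=
          lintegral_mul_const'' _ ((mM.pow_const _).aemeasurable)
      _ = ENNReal.ofReal Xξ * ENNReal.ofReal C₂ := by rw [hXξ]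
  -- integrability on μ.prod ν
  have hInt1 : Integrable (fun p : (Fin n → ℝ) × (Fin n → ℝ) =>
      c' p.1 * (ξ' p.2 * (starRingEnd ℂ) (ω p.1 p.2))) (μ.prod ν) := by
    constructor
    · exact ((mc.comp measurable_fst).mul
        ((mξ.comp measurable_snd).mul (mconj.comp hω))).aestronglyMeasurable
    · have cs3 := lintegral_cs (μ.prod ν) (fun p => (‖c' p.1‖₊ : ℝ≥0∞))
        (fun p => (‖ξ' p.2‖₊ : ℝ≥0∞)) (fun p => (‖ω p.1 p.2‖₊ : ℝ≥0∞))
        (mN.comp measurable_fst).aemeasurable (mM.comp measurable_snd).aemeasurable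
        mW.aemeasurable
      have hbd : ∫⁻ p : (Fin n → ℝ) × (Fin n → ℝ),
          (‖c' p.1 * (ξ' p.2 * (starRingEnd ℂ) (ω p.1 p.2))‖₊ : ℝ≥0∞) ∂(μ.prod ν)
          ≤ (ENNReal.ofReal Xc * ENNReal.ofReal C₁) ^ (1/2:ℝ) *
            (ENNReal.ofReal Xξ * ENNReal.ofReal C₂) ^ (1/2:ℝ) := by
        calc ∫⁻ p : (Fin n → ℝ) × (Fin n → ℝ),
            (‖c' p.1 * (ξ' p.2 * (starRingEnd ℂ) (ω p.1 p.2))‖₊ : ℝ≥0∞) ∂(μ.prod ν)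
            = ∫⁻ p : (Fin n → ℝ) × (Fin n → ℝ),
              (‖c' p.1‖₊ : ℝ≥0∞) * (‖ξ' p.2‖₊ : ℝ≥0∞) * (‖ω p.1 p.2‖₊ : ℝ≥0∞) ∂(μ.prod ν) := by
              refine lintegral_congr fun p => ?_
              simp only [nnnorm_mul, RCLike.nnnorm_conj, ENNReal.coe_mul]
              ring
          _ ≤ (∫⁻ p : (Fin n → ℝ) × (Fin n → ℝ),
                (‖c' p.1‖₊ : ℝ≥0∞) ^ (2:ℝ) * (‖ω p.1 p.2‖₊ : ℝ≥0∞) ∂(μ.prod ν)) ^ (1/2:ℝ) *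
              (∫⁻ p : (Fin n → ℝ) × (Fin n → ℝ),
                (‖ξ' p.2‖₊ : ℝ≥0∞) ^ (2:ℝ) * (‖ω p.1 p.2‖₊ : ℝ≥0∞) ∂(μ.prod ν)) ^ (1/2:ℝ) := cs3
          _ ≤ (ENNReal.ofReal Xc * ENNReal.ofReal C₁) ^ (1/2:ℝ) *
              (ENNReal.ofReal Xξ * ENNReal.ofReal C₂) ^ (1/2:ℝ) :=
              mul_le_mul' (ENNReal.rpow_le_rpow hT1 (by norm_num))
                (ENNReal.rpow_le_rpow hT2 (by norm_num))
      refine lt_of_le_of_lt hbd ?_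
      apply ENNReal.mul_lt_top <;>
        exact ENNReal.rpow_lt_top_of_nonneg (by norm_num) (by finiteness)
  -- Step 1 : Fubini
  have hstep1 : (∫ x, c' x * (∫ y, ξ' y * (starRingEnd ℂ) (ω x y) ∂ν) ∂μ)
      = ∫ y, ξ' y * h y ∂ν := by
    calc ∫ x, c' x * (∫ y, ξ' y * (starRingEnd ℂ) (ω x y) ∂ν) ∂μ
        = ∫ x, ∫ y, c' x * (ξ' y * (starRingEnd ℂ) (ω x y)) ∂ν ∂μ := by
          refine integral_congr_ae (ae_of_all _ fun x => ?_)
          exact (integral_const_mul _ _).symm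
      _ = ∫ y, ∫ x, c' x * (ξ' y * (starRingEnd ℂ) (ω x y)) ∂μ ∂ν :=
          MeasureTheory.integral_integral_swap hInt1
      _ = ∫ y, ξ' y * h y ∂ν := by
          refine integral_congr_ae (ae_of_all _ fun y => ?_)
          show _ = ξ' y * h y
          rw [hhdef]
          dsimp only
          rw [← integral_const_mul]
          refine integral_congr_ae (ae_of_all _ fun x => ?_)
          show c' x * (ξ' y * (starRingEnd ℂ) (ω x y)) = ξ' y * (c' x * (starRingEnd ℂ) (ω x y))
          ring
  -- L² bound for h
  have hHfin : ∫⁻ y, (‖h y‖₊ : ℝ≥0∞) ^ (2:ℝ) ∂ν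
      ≤ ENNReal.ofReal Xc * ENNReal.ofReal C₁ * ENNReal.ofReal C₂ := by
    refine le_trans (lintegral_mono fun y => ?_) hCore
    have hb := enorm_integral_le_lintegral_enorm (μ := μ)
      (f := fun x => c' x * (starRingEnd ℂ) (ω x y))
    have hb' : (‖h y‖₊ : ℝ≥0∞) ≤ ∫⁻ x, (‖c' x‖₊ : ℝ≥0∞) * (‖ω x y‖₊ : ℝ≥0∞) ∂μ := by
      refine le_trans hb (le_of_eq (lintegral_congr fun x => ?_))
      rw [enorm_eq_nnnorm, nnnorm_mul, RCLike.nnnorm_conj, ENNReal.coe_mul]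
    exact ENNReal.rpow_le_rpow hb' (by norm_num)
  have hintH : Integrable (fun y => ‖h y‖ ^ 2) ν := by
    constructor
    · exact ((mh.measurable.norm).pow_const 2).aestronglyMeasurable
    · refine lt_of_le_of_lt (le_trans (le_of_eq ?_) hHfin) (by finiteness)
      refine lintegral_congr fun y => ?_
      rw [enorm_eq_nnnorm, show ((‖(‖h y‖ ^ 2 : ℝ)‖₊ : ℝ≥0∞)) = ((‖h y‖₊ : ℝ≥0∞)) ^ (2:ℕ) by
        rw [nnnorm_pow, nnnorm_norm, ENNReal.coe_pow],
        show (2:ℝ) = ((2:ℕ):ℝ) by norm_num, ENNReal.rpow_natCast]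
  have hH2 : ∫⁻ y, (‖h y‖₊ : ℝ≥0∞) ^ (2:ℝ) ∂ν = ENNReal.ofReal (∫ y, ‖h y‖ ^ 2 ∂ν) :=
    lint_sq_eq hintH
  -- final assembly
  rw [hstep1]
  have hfin5 : (ENNReal.ofReal Xξ) ^ (1/2:ℝ) * (ENNReal.ofReal (Xc * B)) ^ (1/2:ℝ) ≠ ⊤ := by
    apply ENNReal.mul_ne_top <;>
      exact (ENNReal.rpow_lt_top_of_nonneg (by norm_num) ENNReal.ofReal_ne_top).ne
  have cs4 := lintegral_cs ν (fun y => (‖ξ' y‖₊ : ℝ≥0∞)) (fun y => (‖h y‖₊ : ℝ≥0∞))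
    (fun _ => 1) mM.aemeasurable mh.measurable.enorm.aemeasurable aemeasurable_const
  simp only [mul_one] at cs4
  have cs5 : ∫⁻ y, (‖ξ' y * h y‖₊ : ℝ≥0∞) ∂ν
      ≤ (ENNReal.ofReal Xξ) ^ (1/2:ℝ) * (ENNReal.ofReal (Xc * B)) ^ (1/2:ℝ) := by
    refine le_trans (le_of_eq (lintegral_congr fun y => ?_)) (le_trans cs4 ?_)
    · rw [nnnorm_mul, ENNReal.coe_mul]
    · rw [hXξ, hH2]
      refine mul_le_mul' (le_refl _) (ENNReal.rpow_le_rpow ?_ (by norm_num))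
      exact ENNReal.ofReal_le_ofReal hstep3
  calc ‖∫ y, ξ' y * h y ∂ν‖
      = ((‖∫ y, ξ' y * h y ∂ν‖₊ : ℝ≥0∞)).toReal := by simp
    _ ≤ (∫⁻ y, (‖ξ' y * h y‖₊ : ℝ≥0∞) ∂ν).toReal := by
        refine ENNReal.toReal_mono ?_ (enorm_integral_le_lintegral_enorm _)
        exact (lt_of_le_of_lt cs5 (lt_top_iff_ne_top.2 hfin5)).ne
    _ ≤ ((ENNReal.ofReal Xξ) ^ (1/2:ℝ) * (ENNReal.ofReal (Xc * B)) ^ (1/2:ℝ)).toReal :=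
        ENNReal.toReal_mono hfin5 cs5
    _ = Real.sqrt Xξ * Real.sqrt (Xc * B) := by
        rw [ENNReal.toReal_mul, ← ENNReal.toReal_rpow, ← ENNReal.toReal_rpow,
          ENNReal.toReal_ofReal hXξ0, ENNReal.toReal_ofReal (by positivity),
          ← Real.sqrt_eq_rpow, ← Real.sqrt_eq_rpow]
    _ = Real.sqrt Xξ * Real.sqrt Xc * Real.sqrt B := by
        rw [Real.sqrt_mul hXc0, mul_assoc]
end
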